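/- Let (Ω, μ) be a probability space, let 0 < δ ≤ π, and let ε : Ω → ℝ be a random variable whose pushforward law is the uniform distribution on [-δ, δ]. Let θ̂ ∈ ℝ be fixed, let h̄ ∈ ℂ^N, and let h̃ : Ω → ℂ^N have components in L²(μ) with mean zero, and suppose ε and h̃ are independent. Let R be the covariance matrix of h̃, i.e., R a b = ∫ h̃_a · conj(h̃_b) dμ. Define h(ω) = exp(i(θ̂ + ε(ω))) • h̄ + h̃(ω), set ρ := sin(δ)/δ and m := ρ · exp(i·θ̂) • h̄. Then for all indices a, b: ∫ (h_a − m_a) · conj(h_b − m_b) dμ = R a b + (1 − ρ²) · h̄_a · conj(h̄_b); that is, the covariance matrix of h equals Σ := R + (1 − ρ²) · h̄ h̄^H. -/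

import Mathlib

/-!
Centering gives `h - m = U • h̄ + h̃` with `U = exp (i (θ̂ + ε)) - ρ exp (i θ̂)`.
Since `U` is a function of `ε`, it is independent of `h̃`, and `E h̃ = 0` kills the
cross terms; what remains is `E |U|² h̄ h̄ᴴ + R`, where
`E |U|² = 1 + ρ² - 2 ρ E cos ε = 1 - ρ²` because `E cos ε = sin δ / δ` for `ε` uniform
on `[-δ, δ]`.
-/

open MeasureTheory ProbabilityTheory ComplexConjugate

section

variable {Ω : Type*} [MeasurableSpace Ω] {μ : Measure Ω}

lemma integral_mul_add_mul_conj_mul_add {U X Y : Ω → ℂ}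
    (hU : MemLp U 2 μ) (hX : MemLp X 2 μ) (hY : MemLp Y 2 μ)
    (hUX : IndepFun U X μ) (hUY : IndepFun U Y μ)
    (hX0 : ∫ ω, X ω ∂μ = 0) (hY0 : ∫ ω, Y ω ∂μ = 0) (c d : ℂ) :
    ∫ ω, (U ω * c + X ω) * conj (U ω * d + Y ω) ∂μ =
      (∫ ω, U ω * conj (U ω) ∂μ) * (c * conj d) + ∫ ω, X ω * conj (Y ω) ∂μ := by
  have hUU_int : Integrable (fun ω => U ω * conj (U ω)) μ := hU.integrable_mul hU.star
  have hUY_int : Integrable (fun ω => U ω * conj (Y ω)) μ := hU.integrable_mul hY.star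
  have hUX_int : Integrable (fun ω => conj (U ω) * X ω) μ := hU.star.integrable_mul hX
  have hXY_int : Integrable (fun ω => X ω * conj (Y ω)) μ := hX.integrable_mul hY.star
  have hUY0 : ∫ ω, U ω * conj (Y ω) ∂μ = 0 := by
    have hind : IndepFun U (fun ω => conj (Y ω)) μ :=
      hUY.comp measurable_id Complex.continuous_conj.measurable
    rw [hind.integral_fun_mul_eq_mul_integral hU.1 hY.1.star, integral_conj, hY0, map_zero,
      mul_zero]
  have hUX0 : ∫ ω, conj (U ω) * X ω ∂μ = 0 := by
    have hind : IndepFun (fun ω => conj (U ω)) X μ :=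
      hUX.comp Complex.continuous_conj.measurable measurable_id
    rw [hind.integral_fun_mul_eq_mul_integral hU.1.star hX.1, hX0, mul_zero]
  calc ∫ ω, (U ω * c + X ω) * conj (U ω * d + Y ω) ∂μ
      = ∫ ω, (U ω * conj (U ω) * (c * conj d) + U ω * conj (Y ω) * c
          + conj (U ω) * X ω * conj d + X ω * conj (Y ω)) ∂μ := by
        congr 1; ext ω; simp only [map_add, map_mul]; ring
    _ = _ := by
        rw [integral_add ?_ hXY_int, integral_add ?_ (hUX_int.mul_const _),
          integral_add (hUU_int.mul_const _) (hUY_int.mul_const _),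
          integral_mul_const, integral_mul_const, integral_mul_const, hUY0, hUX0]
        · ring
        · exact (hUU_int.mul_const _).add (hUY_int.mul_const _)
        · exact ((hUU_int.mul_const _).add (hUY_int.mul_const _)).add (hUX_int.mul_const _)

lemma integral_comp_of_map_eq_uniform {E : Type*} [NormedAddCommGroup E] [NormedSpace ℝ E]
    {ε : Ω → ℝ} (hε : Measurable ε) {δ : ℝ} (hδ : 0 ≤ δ)
    (hε_law : μ.map ε = (ENNReal.ofReal (2 * δ))⁻¹ • volume.restrict (Set.Icc (-δ) δ))
    {g : ℝ → E} (hg : AEStronglyMeasurable g (μ.map ε)) :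
    ∫ ω, g (ε ω) ∂μ = (2 * δ)⁻¹ • ∫ x in -δ..δ, g x := by
  rw [← integral_map hε.aemeasurable hg, hε_law, integral_smul_measure,
    integral_Icc_eq_integral_Ioc, ← intervalIntegral.integral_of_le (by linarith),
    ENNReal.toReal_inv,
    ENNReal.toReal_ofReal (by linarith)]

lemma integral_cos_of_map_eq_uniform {ε : Ω → ℝ} (hε : Measurable ε) {δ : ℝ} (hδ : 0 ≤ δ)
    (hε_law : μ.map ε = (ENNReal.ofReal (2 * δ))⁻¹ • volume.restrict (Set.Icc (-δ) δ)) :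
    ∫ ω, Real.cos (ε ω) ∂μ = Real.sin δ / δ := by
  rw [integral_comp_of_map_eq_uniform hε hδ hε_law Real.continuous_cos.aestronglyMeasurable,
    integral_cos, Real.sin_neg, smul_eq_mul]
  field_simp
  ring

noncomputable def phaseDeviation (θ ρ x : ℝ) : ℂ :=
  Complex.exp (Complex.I * (θ + x)) - ρ * Complex.exp (Complex.I * θ)

@[fun_prop]
lemma measurable_phaseDeviation (θ ρ : ℝ) : Measurable (phaseDeviation θ ρ) := by
  unfold phaseDeviation
  fun_prop

lemma norm_phaseDeviation_le (θ ρ x : ℝ) : ‖phaseDeviation θ ρ x‖ ≤ 1 + |ρ| := by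
  refine (norm_sub_le _ _).trans_eq ?_
  rw [norm_mul, mul_comm Complex.I, mul_comm Complex.I, ← Complex.ofReal_add,
    Complex.norm_exp_ofReal_mul_I, Complex.norm_exp_ofReal_mul_I, Complex.norm_real,
    Real.norm_eq_abs, mul_one]

lemma normSq_phaseDeviation (θ ρ x : ℝ) :
    Complex.normSq (phaseDeviation θ ρ x) = 1 + ρ ^ 2 - 2 * ρ * Real.cos x := by
  have hfactor : phaseDeviation θ ρ x =
      Complex.exp (θ * Complex.I) * (Complex.exp (x * Complex.I) - ρ) := by
    rw [phaseDeviation, mul_add, Complex.exp_add]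
    ring_nf
  rw [hfactor, map_mul, Complex.normSq_apply (Complex.exp (θ * Complex.I)),
    Complex.normSq_apply]
  simp only [Complex.exp_ofReal_mul_I_re, Complex.exp_ofReal_mul_I_im, Complex.sub_re,
    Complex.sub_im, Complex.ofReal_re, Complex.ofReal_im]
  nlinarith [Real.sin_sq_add_cos_sq x, Real.sin_sq_add_cos_sq θ]

lemma integral_phaseDeviation_mul_conj [IsProbabilityMeasure μ] {ε : Ω → ℝ} (hε : Measurable ε)
    (θ : ℝ) {ρ : ℝ} (hρ : ∫ ω, Real.cos (ε ω) ∂μ = ρ) :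
    ∫ ω, phaseDeviation θ ρ (ε ω) * conj (phaseDeviation θ ρ (ε ω)) ∂μ =
      ((1 - ρ ^ 2 : ℝ) : ℂ) := by
  have hcos : Integrable (fun ω => Real.cos (ε ω)) μ :=
    .of_bound (by fun_prop) 1 (.of_forall fun ω => by simpa using Real.abs_cos_le_one (ε ω))
  simp_rw [Complex.mul_conj, normSq_phaseDeviation]
  rw [integral_complex_ofReal, integral_sub (integrable_const _) (hcos.const_mul _),
    integral_const_mul, integral_const, hρ]
  simp only [probReal_univ, one_smul]
  ring_nf

end

theorem rician_covariance_imperfect_phase_general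
    {Ω : Type*} [MeasurableSpace Ω] (μ : Measure Ω) [IsProbabilityMeasure μ]
    (N : ℕ) (δ : ℝ) (hδ0 : 0 < δ)
    (ε : Ω → ℝ) (hε_meas : Measurable ε)
    (hε_law : Measure.map ε μ =
      (ENNReal.ofReal (2 * δ))⁻¹ • (volume.restrict (Set.Icc (-δ) δ)))
    (θhat : ℝ) (hbar : Fin N → ℂ)
    (htilde : Ω → Fin N → ℂ)
    (h_L2 : ∀ a, MemLp (fun ω => htilde ω a) 2 μ)
    (h_mean0 : ∀ a, ∫ ω, htilde ω a ∂μ = 0)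
    (h_indep : ProbabilityTheory.IndepFun ε htilde μ)
    (R : Matrix (Fin N) (Fin N) ℂ)
    (hR : ∀ a b, R a b = ∫ ω, htilde ω a * (starRingEnd ℂ) (htilde ω b) ∂μ)
    (h : Ω → Fin N → ℂ)
    (h_def : ∀ ω, h ω = Complex.exp (Complex.I * (θhat + ε ω)) • hbar + htilde ω)
    (ρ : ℝ) (hρ : ρ = Real.sin δ / δ)
    (m : Fin N → ℂ) (hm : m = ((ρ : ℂ) * Complex.exp (Complex.I * θhat)) • hbar) :
    ∀ a b, ∫ ω, (h ω a - m a) * (starRingEnd ℂ) (h ω b - m b) ∂μ =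
      R a b + ((1 - ρ ^ 2 : ℝ) : ℂ) * (hbar a * (starRingEnd ℂ) (hbar b)) := by
  intro a b
  set U : Ω → ℂ := fun ω => phaseDeviation θhat ρ (ε ω)
  have hcentered : ∀ c ω, h ω c - m c = U ω * hbar c + htilde ω c := by
    intro c ω
    simp only [h_def, hm, U, phaseDeviation, Pi.add_apply, Pi.smul_apply, smul_eq_mul]
    ring
  have hU : MemLp U 2 μ :=
    .of_bound (by fun_prop) _ (.of_forall fun ω => norm_phaseDeviation_le θhat ρ (ε ω))
  have hU_indep : ∀ c, IndepFun U (fun ω => htilde ω c) μ := fun c =>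
    h_indep.comp (measurable_phaseDeviation θhat ρ) (measurable_pi_apply c)
  have hcos : ∫ ω, Real.cos (ε ω) ∂μ = ρ := by
    rw [hρ, integral_cos_of_map_eq_uniform hε_meas hδ0.le hε_law]
  simp_rw [hcentered]
  rw [integral_mul_add_mul_conj_mul_add hU (h_L2 a) (h_L2 b) (hU_indep a) (hU_indep b)
    (h_mean0 a) (h_mean0 b), integral_phaseDeviation_mul_conj hε_meas θhat hcos, hR]
  ring

/-- Covariance of the Rician channel under imperfect LoS phase tracking:
with `ε` uniform on `[-δ, δ]` independent of the zero-mean square-integrable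
NLoS component `h̃` (with covariance `R`), the channel
`h ω = exp (i (θ̂ + ε ω)) • h̄ + h̃ ω` has mean `m = ρ · exp (i θ̂) • h̄` and
covariance `Σ = R + (1 - ρ²) · h̄ h̄ᴴ`, where `ρ = sin δ / δ`. -/
theorem rician_covariance_imperfect_phase
    {Ω : Type*} [MeasurableSpace Ω] (μ : Measure Ω) [IsProbabilityMeasure μ]
    (N : ℕ) (δ : ℝ) (hδ0 : 0 < δ) (hδπ : δ ≤ Real.pi)
    (ε : Ω → ℝ) (hε_meas : Measurable ε)
    (hε_law : Measure.map ε μ =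
      (ENNReal.ofReal (2 * δ))⁻¹ • (volume.restrict (Set.Icc (-δ) δ)))
    (θhat : ℝ) (hbar : Fin N → ℂ)
    (htilde : Ω → Fin N → ℂ)
    (h_L2 : ∀ a, MemLp (fun ω => htilde ω a) 2 μ)
    (h_mean0 : ∀ a, ∫ ω, htilde ω a ∂μ = 0)
    (h_indep : ProbabilityTheory.IndepFun ε htilde μ)
    (R : Matrix (Fin N) (Fin N) ℂ)
    (hR : ∀ a b, R a b = ∫ ω, htilde ω a * (starRingEnd ℂ) (htilde ω b) ∂μ)
    (h : Ω → Fin N → ℂ)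
    (h_def : ∀ ω, h ω = Complex.exp (Complex.I * (θhat + ε ω)) • hbar + htilde ω)
    (ρ : ℝ) (hρ : ρ = Real.sin δ / δ)
    (m : Fin N → ℂ) (hm : m = ((ρ : ℂ) * Complex.exp (Complex.I * θhat)) • hbar) :
    ∀ a b, ∫ ω, (h ω a - m a) * (starRingEnd ℂ) (h ω b - m b) ∂μ =
      R a b + ((1 - ρ ^ 2 : ℝ) : ℂ) * (hbar a * (starRingEnd ℂ) (hbar b)) :=
  rician_covariance_imperfect_phase_general μ N δ hδ0 ε hε_meas hε_law θhat hbar htilde h_L2 h_mean0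
    h_indep R hR h h_def ρ hρ m hm
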